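/- arXiv:2602.08075 — 2 statements merged into one kernel-verified Lean document; each statement's English description precedes it below -/
import Mathlib

section
/- Let A, B₂, C_l, D_{l,2} (1 ≤ l ≤ r) be real matrices of compatible sizes, let R ∈ 𝕊^{m₂} and Z ∈ 𝕊ⁿ, and let K, K' ∈ ℝ^{m₂×n} with K' = −(R + Σ_l D_{l,2}ᵀ Z D_{l,2})⁻¹(B₂ᵀZ + Σ_l D_{l,2}ᵀ Z C_l), assuming R + Σ_l D_{l,2}ᵀ Z D_{l,2} is invertible. Suppose Z satisfies the Lyapunov equation Z(A + B₂K) + (A + B₂K)ᵀZ + Σ_l (C_l + D_{l,2}K)ᵀZ(C_l + D_{l,2}K) + M + KᵀRK = 0 for some M ∈ 𝕊ⁿ. Then Z(A + B₂K') + (A + B₂K')ᵀZ + Σ_l (C_l + D_{l,2}K')ᵀZ(C_l + D_{l,2}K') = −M − K'ᵀRK' − (K' − K)ᵀ(R + Σ_l D_{l,2}ᵀ Z D_{l,2})(K' − K). -/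
open Matrix

/-- completion-of-squares identity for the policy-improvement step.
If `Z` solves the closed-loop Lyapunov equation for the gain `K`, and
`K' = −(R + Σ D_lᵀZD_l)⁻¹(B₂ᵀZ + Σ D_lᵀZC_l)`, then the closed-loop Lyapunov
expression at `K'` equals `−M − K'ᵀRK' − (K'−K)ᵀ(R + Σ D_lᵀZD_l)(K'−K)`. -/
theorem policy_improvement_identity (n m₂ r : ℕ)
    (A : Matrix (Fin n) (Fin n) ℝ) (B₂ : Matrix (Fin n) (Fin m₂) ℝ)
    (C : Fin r → Matrix (Fin n) (Fin n) ℝ) (D : Fin r → Matrix (Fin n) (Fin m₂) ℝ)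
    (R : Matrix (Fin m₂) (Fin m₂) ℝ) (hR : R.IsSymm)
    (Z : Matrix (Fin n) (Fin n) ℝ) (hZ : Z.IsSymm)
    (M : Matrix (Fin n) (Fin n) ℝ) (hM : M.IsSymm)
    (K K' : Matrix (Fin m₂) (Fin n) ℝ)
    (hinv : IsUnit (R + ∑ l, (D l)ᵀ * Z * D l).det)
    (hK' : K' = -((R + ∑ l, (D l)ᵀ * Z * D l)⁻¹ * (B₂ᵀ * Z + ∑ l, (D l)ᵀ * Z * C l)))
    (hlyap : Z * (A + B₂ * K) + (A + B₂ * K)ᵀ * Z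
        + (∑ l, (C l + D l * K)ᵀ * Z * (C l + D l * K)) + M + Kᵀ * R * K = 0) :
    Z * (A + B₂ * K') + (A + B₂ * K')ᵀ * Z
        + (∑ l, (C l + D l * K')ᵀ * Z * (C l + D l * K'))
      = -M - K'ᵀ * R * K'
        - (K' - K)ᵀ * (R + ∑ l, (D l)ᵀ * Z * D l) * (K' - K) := by
  have hZe : Zᵀ = Z := hZ
  have hRe : Rᵀ = R := hR
  set G0 : Matrix (Fin m₂) (Fin m₂) ℝ := ∑ l, (D l)ᵀ * Z * D l with hG0
  set L0 : Matrix (Fin m₂) (Fin n) ℝ := ∑ l, (D l)ᵀ * Z * C l with hL0def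
  set G : Matrix (Fin m₂) (Fin m₂) ℝ := R + G0 with hGdef
  clear_value G
  clear_value G0
  clear_value L0
  have hG0symm : G0ᵀ = G0 := by
    rw [hG0, transpose_sum]
    refine Finset.sum_congr rfl fun l _ => ?_
    rw [transpose_mul, transpose_mul, transpose_transpose, hZe, Matrix.mul_assoc]
  have hGsymm : Gᵀ = G := by rw [hGdef, transpose_add, hRe, hG0symm]
  -- key relation: G * K' = -(B₂ᵀ Z + L0)
  have key : G * K' = -(B₂ᵀ * Z + L0) := by
    rw [hK', Matrix.mul_neg, ← Matrix.mul_assoc, Matrix.mul_nonsing_inv _ hinv,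
      Matrix.one_mul]
  have hL0 : L0 = -(G * K') - B₂ᵀ * Z := by
    rw [key]; abel
  have hL0T : L0ᵀ = -(K'ᵀ * G) - Z * B₂ := by
    rw [hL0, transpose_sub, transpose_neg, transpose_mul, hGsymm, transpose_mul, hZe,
      transpose_transpose]
  -- expansion of the closed-loop quadratic sum for an arbitrary gain X
  have expand : ∀ X : Matrix (Fin m₂) (Fin n) ℝ,
      ∑ l, (C l + D l * X)ᵀ * Z * (C l + D l * X)
        = (∑ l, (C l)ᵀ * Z * C l) + L0ᵀ * X + Xᵀ * L0 + Xᵀ * G0 * X := by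
    intro X
    have h1 : ∀ l : Fin r, (C l + D l * X)ᵀ * Z * (C l + D l * X)
        = (C l)ᵀ * Z * C l + ((D l)ᵀ * Z * C l)ᵀ * X + Xᵀ * ((D l)ᵀ * Z * C l)
          + Xᵀ * ((D l)ᵀ * Z * D l) * X := by
      intro l
      rw [transpose_add, transpose_mul]
      rw [transpose_mul, transpose_mul, transpose_transpose, hZe]
      simp only [Matrix.add_mul, Matrix.mul_add, Matrix.mul_assoc]
      abel
    calc ∑ l, (C l + D l * X)ᵀ * Z * (C l + D l * X)
        = ∑ l, ((C l)ᵀ * Z * C l + ((D l)ᵀ * Z * C l)ᵀ * X + Xᵀ * ((D l)ᵀ * Z * C l)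
            + Xᵀ * ((D l)ᵀ * Z * D l) * X) := Finset.sum_congr rfl fun l _ => h1 l
      _ = (∑ l, (C l)ᵀ * Z * C l) + (∑ l, ((D l)ᵀ * Z * C l)ᵀ * X)
            + (∑ l, Xᵀ * ((D l)ᵀ * Z * C l)) + ∑ l, Xᵀ * ((D l)ᵀ * Z * D l) * X := by
          simp [Finset.sum_add_distrib]
      _ = (∑ l, (C l)ᵀ * Z * C l) + L0ᵀ * X + Xᵀ * L0 + Xᵀ * G0 * X := by
          simp only [hL0def, hG0, transpose_sum, Matrix.sum_mul, Matrix.mul_sum]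
  rw [expand] at hlyap ⊢
  have hS0 : (∑ l, (C l)ᵀ * Z * C l)
      = -(Z * (A + B₂ * K) + (A + B₂ * K)ᵀ * Z + L0ᵀ * K + Kᵀ * L0 + Kᵀ * G0 * K
          + M + Kᵀ * R * K) := by
    have := hlyap
    linear_combination (norm := noncomm_ring) this
  have hG0eq : G0 = G - R := by rw [hGdef]; abel
  rw [hS0, hL0T, hL0, hG0eq]
  simp only [transpose_add, transpose_sub, transpose_neg, transpose_mul, hZe,
    Matrix.add_mul, Matrix.mul_add, Matrix.sub_mul, Matrix.mul_sub, Matrix.neg_mul,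
    Matrix.mul_neg, Matrix.mul_assoc, neg_neg, neg_add, neg_sub, sub_eq_add_neg]
  abel
end

section
/- Let Z₁, Z₂ ∈ 𝕊ⁿ satisfy Z_i(A + B₂K_i) + (A + B₂K_i)ᵀZ_i + Σ_l (C_l + D_{l,2}K_i)ᵀZ_i(C_l + D_{l,2}K_i) + M + K_iᵀRK_i = 0 for i = 1, 2, where K₂ = −(R + Σ_l D_{l,2}ᵀZ₁D_{l,2})⁻¹(B₂ᵀZ₁ + Σ_l D_{l,2}ᵀZ₁C_l), and suppose R + Σ_l D_{l,2}ᵀZ₁D_{l,2} ⪰ 0 and the system (A + B₂K₂, C₁ + D_{1,2}K₂, …, C_r + D_{r,2}K₂) is mean-square stable. Then Δ := Z₂ − Z₁ satisfies Δ(A + B₂K₂) + (A + B₂K₂)ᵀΔ + Σ_l (C_l + D_{l,2}K₂)ᵀΔ(C_l + D_{l,2}K₂) = (K₁ − K₂)ᵀ(R + Σ_l D_{l,2}ᵀZ₁D_{l,2})(K₁ − K₂) ⪰ 0, and consequently Z₂ ⪯ Z₁. -/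
/-!
Write `ℒ_K Z` for the Lyapunov operator of the closed loop under the gain `K`. As a function of
`K`, `ℒ_K Z₁ + KᵀRK` is a quadratic with leading coefficient `S = R + Σ D_lᵀZ₁D_l`, stationary
at `K₂`; completing the square gives
`ℒ_{K₁} Z₁ + K₁ᵀRK₁ = ℒ_{K₂} Z₁ + K₂ᵀRK₂ + (K₁ - K₂)ᵀS(K₁ - K₂)`, and subtracting the two Riccati
equations yields `ℒ_{K₂}(Z₂ - Z₁) = (K₁ - K₂)ᵀS(K₁ - K₂) ⪰ 0`.

Stability then forces `Z₂ - Z₁ ⪯ 0`. Let `Z ≻ 0` with `ℒ Z ≺ 0` and suppose `Δ = Z₂ - Z₁` has a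
positive direction. Taking `s > 0` the maximum of `xᵀΔx / xᵀZx`, the matrix `Y = sZ - Δ` is positive
semidefinite with a kernel vector `x`. On `x` the terms `YA + AᵀY` of `ℒ Y` vanish and the others
are nonnegative, so `xᵀ(ℒ Y)x ≥ 0`; but `ℒ Y = s ℒ Z - ℒ Δ ≺ 0`.
-/

open Matrix

/-- Mean-square stability via the stochastic Lyapunov criterion (equivalent to
`E[X(t)ᵀX(t)] → 0` for the system `dX = AXdt + Σ_l C_lXdw_l`). -/
def MeanSquareStable {n : ℕ} (r : ℕ) (A : Matrix (Fin n) (Fin n) ℝ)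
    (C : Fin r → Matrix (Fin n) (Fin n) ℝ) : Prop :=
  ∃ Z : Matrix (Fin n) (Fin n) ℝ, Z.PosDef ∧
    (-(Z * A + Aᵀ * Z + ∑ l, (C l)ᵀ * Z * C l)).PosDef

namespace Matrix

section Lyapunov

variable {n ι α : Type*} [Fintype n] [Fintype ι] [CommRing α]

def lyapunovOp (A : Matrix n n α) (C : ι → Matrix n n α) : Matrix n n α →ₗ[α] Matrix n n α where
  toFun X := X * A + Aᵀ * X + ∑ l, (C l)ᵀ * X * C l
  map_add' X Y := by
    simp only [Matrix.add_mul, Matrix.mul_add, Finset.sum_add_distrib]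
    abel
  map_smul' c X := by
    simp only [Matrix.smul_mul, Matrix.mul_smul, Finset.smul_sum, smul_add, RingHom.id_apply]

theorem lyapunovOp_apply (A : Matrix n n α) (C : ι → Matrix n n α) (X : Matrix n n α) :
    lyapunovOp A C X = X * A + Aᵀ * X + ∑ l, (C l)ᵀ * X * C l :=
  rfl

variable {m : Type*} [Fintype m]

theorem lyapunovOp_closedLoop (A : Matrix n n α) (B : Matrix n m α) (C : ι → Matrix n n α)
    (D : ι → Matrix n m α) (K : Matrix m n α) (Z : Matrix n n α) :
    lyapunovOp (A + B * K) (fun l => C l + D l * K) Z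
      = lyapunovOp A C Z + (Z * B + ∑ l, (C l)ᵀ * Z * D l) * K
        + Kᵀ * (Bᵀ * Z + ∑ l, (D l)ᵀ * Z * C l) + Kᵀ * (∑ l, (D l)ᵀ * Z * D l) * K := by
  simp only [lyapunovOp_apply, transpose_add, transpose_mul, Matrix.mul_add, Matrix.add_mul,
    Finset.sum_add_distrib, Matrix.sum_mul, Matrix.mul_sum, Matrix.mul_assoc]
  abel

theorem lyapunovOp_closedLoop_add_eq_of_stationary (A : Matrix n n α) (B : Matrix n m α)
    (C : ι → Matrix n n α) (D : ι → Matrix n m α) (R : Matrix m m α) {Z : Matrix n n α}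
    (hZ : Z.IsSymm) (hS : (R + ∑ l, (D l)ᵀ * Z * D l).IsSymm) {K' : Matrix m n α}
    (hK' : (R + ∑ l, (D l)ᵀ * Z * D l) * K' + (Bᵀ * Z + ∑ l, (D l)ᵀ * Z * C l) = 0)
    (K : Matrix m n α) :
    lyapunovOp (A + B * K) (fun l => C l + D l * K) Z + Kᵀ * R * K
      = lyapunovOp (A + B * K') (fun l => C l + D l * K') Z + K'ᵀ * R * K'
        + (K - K')ᵀ * (R + ∑ l, (D l)ᵀ * Z * D l) * (K - K') := by
  set S := R + ∑ l, (D l)ᵀ * Z * D l with hSdef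
  have hG : Bᵀ * Z + ∑ l, (D l)ᵀ * Z * C l = -(S * K') := eq_neg_of_add_eq_zero_right hK'
  have hGt : Z * B + ∑ l, (C l)ᵀ * Z * D l = -(K'ᵀ * S) := by
    have := congrArg transpose hG
    simpa [transpose_add, transpose_mul, transpose_sum, hZ.eq, hS.eq, Matrix.mul_assoc] using this
  have hQ : ∑ l, (D l)ᵀ * Z * D l = S - R := by rw [hSdef]; abel
  rw [lyapunovOp_closedLoop, lyapunovOp_closedLoop, hG, hGt, hQ]
  simp only [transpose_sub, Matrix.mul_sub, Matrix.sub_mul, Matrix.mul_neg, Matrix.neg_mul,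
    Matrix.mul_assoc]
  abel

end Lyapunov

section Positivity

variable {n ι : Type*} [Fintype n] [Fintype ι]

theorem PosSemidef.dotProduct_lyapunovOp_mulVec_nonneg {Y : Matrix n n ℝ} (hY : Y.PosSemidef)
    (A : Matrix n n ℝ) (C : ι → Matrix n n ℝ) {x : n → ℝ} (hx : Y *ᵥ x = 0) :
    0 ≤ x ⬝ᵥ lyapunovOp A C Y *ᵥ x := by
  have hxY : x ᵥ* Y = 0 := by
    rw [← isHermitian_iff_isSymm.mp hY.isHermitian, vecMul_transpose, hx]
  have hYA : x ⬝ᵥ (Y * A) *ᵥ x = 0 := by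
    rw [← mulVec_mulVec, dotProduct_mulVec, hxY, zero_dotProduct]
  have hAY : x ⬝ᵥ (Aᵀ * Y) *ᵥ x = 0 := by
    rw [← mulVec_mulVec, hx, mulVec_zero, dotProduct_zero]
  have hterm (l : ι) : 0 ≤ x ⬝ᵥ ((C l)ᵀ * Y * C l) *ᵥ x := by
    simpa [← mulVec_mulVec, dotProduct_mulVec, vecMul_transpose]
      using hY.dotProduct_mulVec_nonneg (C l *ᵥ x)
  rw [lyapunovOp_apply, add_mulVec, add_mulVec, dotProduct_add, dotProduct_add, hYA, hAY,
    zero_add, zero_add, sum_mulVec, dotProduct_sum]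
  exact Finset.sum_nonneg fun l _ => hterm l

theorem dotProduct_smul_mulVec_smul (M : Matrix n n ℝ) (c : ℝ) (x : n → ℝ) :
    (c • x) ⬝ᵥ M *ᵥ (c • x) = c ^ 2 * (x ⬝ᵥ M *ᵥ x) := by
  rw [mulVec_smul, dotProduct_smul, smul_dotProduct, smul_eq_mul, smul_eq_mul, sq, mul_assoc]

theorem PosDef.exists_forall_div_le [Nonempty n] {Z : Matrix n n ℝ} (hZ : Z.PosDef)
    (Δ : Matrix n n ℝ) :
    ∃ x₀ ≠ 0, ∀ x ≠ 0, (x ⬝ᵥ Δ *ᵥ x) / (x ⬝ᵥ Z *ᵥ x) ≤ (x₀ ⬝ᵥ Δ *ᵥ x₀) / (x₀ ⬝ᵥ Z *ᵥ x₀) := by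
  set ρ : (n → ℝ) → ℝ := fun x => (x ⬝ᵥ Δ *ᵥ x) / (x ⬝ᵥ Z *ᵥ x)
  have hpos {x : n → ℝ} (hx : x ≠ 0) : 0 < x ⬝ᵥ Z *ᵥ x := by
    simpa using hZ.dotProduct_mulVec_pos hx
  have hsphere {x : n → ℝ} (hx : x ∈ Metric.sphere 0 1) : x ≠ 0 := by
    rintro rfl; simp at hx
  have hscale {x : n → ℝ} (hx : x ≠ 0) : ρ (‖x‖⁻¹ • x) = ρ x := by
    simp only [ρ, dotProduct_smul_mulVec_smul]
    exact mul_div_mul_left _ _ (by positivity)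
  have hcont : ContinuousOn ρ (Metric.sphere 0 1) :=
    ContinuousOn.div (by fun_prop) (by fun_prop) fun x hx => (hpos (hsphere hx)).ne'
  obtain ⟨x₀, hx₀, hmax⟩ := (isCompact_sphere (0 : n → ℝ) 1).exists_isMaxOn
    (NormedSpace.sphere_nonempty.mpr zero_le_one) hcont
  refine ⟨x₀, hsphere hx₀, fun x hx => ?_⟩
  show ρ x ≤ ρ x₀
  rw [← hscale hx]
  exact hmax (by simp [norm_smul, norm_ne_zero_iff.mpr hx])

theorem PosDef.exists_posSemidef_smul_sub_mulVec_eq_zero {Z Δ : Matrix n n ℝ} (hZ : Z.PosDef)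
    (hΔ : Δ.IsHermitian) {v : n → ℝ} (hv : 0 < v ⬝ᵥ Δ *ᵥ v) :
    ∃ s : ℝ, 0 < s ∧ ∃ x ≠ 0, (s • Z - Δ).PosSemidef ∧ (s • Z - Δ) *ᵥ x = 0 := by
  have hv0 : v ≠ 0 := by rintro rfl; simp at hv
  obtain ⟨i, -⟩ := Function.ne_iff.mp hv0
  have : Nonempty n := ⟨i⟩
  have hpos {x : n → ℝ} (hx : x ≠ 0) : 0 < x ⬝ᵥ Z *ᵥ x := by
    simpa using hZ.dotProduct_mulVec_pos hx
  obtain ⟨x₀, hx₀, hmax⟩ := hZ.exists_forall_div_le Δ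
  set s := (x₀ ⬝ᵥ Δ *ᵥ x₀) / (x₀ ⬝ᵥ Z *ᵥ x₀)
  have hquad (x : n → ℝ) : x ⬝ᵥ (s • Z - Δ) *ᵥ x = s * (x ⬝ᵥ Z *ᵥ x) - x ⬝ᵥ Δ *ᵥ x := by
    simp [sub_mulVec, smul_mulVec, dotProduct_sub, dotProduct_smul]
  have hY : (s • Z - Δ).PosSemidef := by
    have hherm := (hZ.isHermitian.smul (IsSelfAdjoint.all s)).sub hΔ
    refine PosSemidef.of_dotProduct_mulVec_nonneg hherm fun x => ?_
    rw [star_trivial, hquad, sub_nonneg]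
    rcases eq_or_ne x 0 with rfl | hx
    · simp
    · exact (div_le_iff₀ (hpos hx)).mp (hmax x hx)
  refine ⟨s, (div_pos hv (hpos hv0)).trans_le (hmax v hv0), x₀, hx₀, hY, ?_⟩
  rw [← hY.dotProduct_mulVec_zero_iff, star_trivial, hquad, div_mul_cancel₀ _ (hpos hx₀).ne',
    sub_self]

end Positivity

end Matrix

theorem MeanSquareStable.neg_posSemidef_of_posSemidef_lyapunovOp {n r : ℕ}
    {A : Matrix (Fin n) (Fin n) ℝ} {C : Fin r → Matrix (Fin n) (Fin n) ℝ}
    (hstab : MeanSquareStable r A C) {Δ : Matrix (Fin n) (Fin n) ℝ} (hΔ : Δ.IsHermitian)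
    (hW : (lyapunovOp A C Δ).PosSemidef) : (-Δ).PosSemidef := by
  obtain ⟨Z, hZ, hLZ⟩ := hstab
  refine PosSemidef.of_dotProduct_mulVec_nonneg hΔ.neg fun v => ?_
  by_contra! hv
  obtain ⟨s, hs, x, hx, hY, hYx⟩ := hZ.exists_posSemidef_smul_sub_mulVec_eq_zero hΔ
    (by simpa [neg_mulVec] using hv)
  have hY := hY.dotProduct_lyapunovOp_mulVec_nonneg A C hYx
  have hZx := hLZ.dotProduct_mulVec_pos hx
  have hWx := hW.dotProduct_mulVec_nonneg x
  rw [← lyapunovOp_apply] at hZx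
  simp only [map_sub, map_smul, sub_mulVec, smul_mulVec, dotProduct_sub, dotProduct_smul,
    smul_eq_mul, neg_mulVec, dotProduct_neg, star_trivial] at hY hZx hWx
  nlinarith

theorem policy_iteration_monotone_general (n m₂ r : ℕ)
    (A : Matrix (Fin n) (Fin n) ℝ) (B₂ : Matrix (Fin n) (Fin m₂) ℝ)
    (C : Fin r → Matrix (Fin n) (Fin n) ℝ) (D : Fin r → Matrix (Fin n) (Fin m₂) ℝ)
    (M : Matrix (Fin n) (Fin n) ℝ)
    (R : Matrix (Fin m₂) (Fin m₂) ℝ)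
    (Z₁ Z₂ : Matrix (Fin n) (Fin n) ℝ) (hZ₁ : Z₁.IsSymm) (hZ₂ : Z₂.IsSymm)
    (K₁ K₂ : Matrix (Fin m₂) (Fin n) ℝ)
    (hinv : IsUnit (R + ∑ l, (D l)ᵀ * Z₁ * D l).det)
    (hK₂ : K₂ = -((R + ∑ l, (D l)ᵀ * Z₁ * D l)⁻¹
        * (B₂ᵀ * Z₁ + ∑ l, (D l)ᵀ * Z₁ * C l)))
    (hRZ : (R + ∑ l, (D l)ᵀ * Z₁ * D l).PosSemidef)
    (hstab : MeanSquareStable r (A + B₂ * K₂) (fun l => C l + D l * K₂))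
    (hlyap₁ : Z₁ * (A + B₂ * K₁) + (A + B₂ * K₁)ᵀ * Z₁
        + (∑ l, (C l + D l * K₁)ᵀ * Z₁ * (C l + D l * K₁)) + M + K₁ᵀ * R * K₁ = 0)
    (hlyap₂ : Z₂ * (A + B₂ * K₂) + (A + B₂ * K₂)ᵀ * Z₂
        + (∑ l, (C l + D l * K₂)ᵀ * Z₂ * (C l + D l * K₂)) + M + K₂ᵀ * R * K₂ = 0) :
    ((Z₂ - Z₁) * (A + B₂ * K₂) + (A + B₂ * K₂)ᵀ * (Z₂ - Z₁)
        + (∑ l, (C l + D l * K₂)ᵀ * (Z₂ - Z₁) * (C l + D l * K₂))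
      = (K₁ - K₂)ᵀ * (R + ∑ l, (D l)ᵀ * Z₁ * D l) * (K₁ - K₂)) ∧
    ((K₁ - K₂)ᵀ * (R + ∑ l, (D l)ᵀ * Z₁ * D l) * (K₁ - K₂)).PosSemidef ∧
    (Z₁ - Z₂).PosSemidef := by
  set S := R + ∑ l, (D l)ᵀ * Z₁ * D l
  have hopt : S * K₂ + (B₂ᵀ * Z₁ + ∑ l, (D l)ᵀ * Z₁ * C l) = 0 := by
    rw [hK₂, Matrix.mul_neg, ← Matrix.mul_assoc, mul_nonsing_inv _ hinv, Matrix.one_mul,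
      neg_add_cancel]
  have hres := lyapunovOp_closedLoop_add_eq_of_stationary A B₂ C D R hZ₁
    (isHermitian_iff_isSymm.mp hRZ.isHermitian) hopt K₁
  have hΔ : lyapunovOp (A + B₂ * K₂) (fun l => C l + D l * K₂) (Z₂ - Z₁)
      = (K₁ - K₂)ᵀ * S * (K₁ - K₂) := by
    rw [← lyapunovOp_apply] at hlyap₁ hlyap₂
    rw [map_sub]
    linear_combination (norm := abel) hlyap₂ - hlyap₁ + hres
  have hW : ((K₁ - K₂)ᵀ * S * (K₁ - K₂)).PosSemidef := by
    simpa [conjTranspose_eq_transpose_of_trivial] using hRZ.conjTranspose_mul_mul_same (K₁ - K₂)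
  refine ⟨hΔ, hW, ?_⟩
  have hherm : (Z₂ - Z₁).IsHermitian := isHermitian_iff_isSymm.mpr (hZ₂.sub hZ₁)
  simpa using hstab.neg_posSemidef_of_posSemidef_lyapunovOp hherm (hΔ ▸ hW)

/-- monotonicity of the inner policy-iteration loop.  If `Z₁, Z₂`
solve the closed-loop Lyapunov equations for the gains `K₁, K₂` respectively,
where `K₂` is the improved gain computed from `Z₁`, `R + Σ D_lᵀZ₁D_l ⪰ 0`, and
the closed-loop system under `K₂` is mean-square stable, then
`Δ = Z₂ − Z₁` solves the displayed Lyapunov equation with positive semidefinite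
inhomogeneity, and `Z₂ ⪯ Z₁`. -/
theorem policy_iteration_monotone (n m₂ r : ℕ)
    (A : Matrix (Fin n) (Fin n) ℝ) (B₂ : Matrix (Fin n) (Fin m₂) ℝ)
    (C : Fin r → Matrix (Fin n) (Fin n) ℝ) (D : Fin r → Matrix (Fin n) (Fin m₂) ℝ)
    (M : Matrix (Fin n) (Fin n) ℝ) (hM : M.IsSymm)
    (R : Matrix (Fin m₂) (Fin m₂) ℝ) (hR : R.IsSymm)
    (Z₁ Z₂ : Matrix (Fin n) (Fin n) ℝ) (hZ₁ : Z₁.IsSymm) (hZ₂ : Z₂.IsSymm)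
    (K₁ K₂ : Matrix (Fin m₂) (Fin n) ℝ)
    (hinv : IsUnit (R + ∑ l, (D l)ᵀ * Z₁ * D l).det)
    (hK₂ : K₂ = -((R + ∑ l, (D l)ᵀ * Z₁ * D l)⁻¹
        * (B₂ᵀ * Z₁ + ∑ l, (D l)ᵀ * Z₁ * C l)))
    (hRZ : (R + ∑ l, (D l)ᵀ * Z₁ * D l).PosSemidef)
    (hstab : MeanSquareStable r (A + B₂ * K₂) (fun l => C l + D l * K₂))
    (hlyap₁ : Z₁ * (A + B₂ * K₁) + (A + B₂ * K₁)ᵀ * Z₁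
        + (∑ l, (C l + D l * K₁)ᵀ * Z₁ * (C l + D l * K₁)) + M + K₁ᵀ * R * K₁ = 0)
    (hlyap₂ : Z₂ * (A + B₂ * K₂) + (A + B₂ * K₂)ᵀ * Z₂
        + (∑ l, (C l + D l * K₂)ᵀ * Z₂ * (C l + D l * K₂)) + M + K₂ᵀ * R * K₂ = 0) :
    ((Z₂ - Z₁) * (A + B₂ * K₂) + (A + B₂ * K₂)ᵀ * (Z₂ - Z₁)
        + (∑ l, (C l + D l * K₂)ᵀ * (Z₂ - Z₁) * (C l + D l * K₂))
      = (K₁ - K₂)ᵀ * (R + ∑ l, (D l)ᵀ * Z₁ * D l) * (K₁ - K₂)) ∧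
    ((K₁ - K₂)ᵀ * (R + ∑ l, (D l)ᵀ * Z₁ * D l) * (K₁ - K₂)).PosSemidef ∧
    (Z₁ - Z₂).PosSemidef :=
  policy_iteration_monotone_general n m₂ r A B₂ C D M R Z₁ Z₂ hZ₁ hZ₂ K₁ K₂ hinv hK₂ hRZ hstab
    hlyap₁ hlyap₂
end
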